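/- If P is a simple 𝒦_n-module and there exists 0 ≠ p ∈ P with ∂_i p = 0 for all i = 1,...,n, then P is isomorphic to the natural 𝒦_n-module A_n. -/

import Mathlib

/-- A module over the Weyl algebra `𝒦ₙ` of the Laurent polynomial algebra
`Aₙ = ℂ[x₁^{±1},...,xₙ^{±1}]`: the data of commuting multiplication operators `X r`
(by the monomials `x^r`, `r ∈ ℤⁿ`) and degree-derivation operators `pd i = xᵢ∂/∂xᵢ`,
subject to the defining relations of `𝒦ₙ`. -/
structure WeylModule (n : ℕ) (P : Type*) [AddCommGroup P] [Module ℂ P] where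
  X : (Fin n → ℤ) → Module.End ℂ P
  pd : Fin n → Module.End ℂ P
  X_zero : X 0 = 1
  X_add : ∀ r s, X (r + s) = X r * X s
  pd_comm : ∀ i j, pd i * pd j = pd j * pd i
  pd_X : ∀ i r, pd i * X r = X r * (pd i + (r i : ℂ) • 1)

/-- The pairing `⟨u, s⟩ = ∑ i, u i * s i`. -/
noncomputable def pairing {n : ℕ} (u : Fin n → ℂ) (s : Fin n → ℤ) : ℂ := ∑ i, u i * (s i : ℂ)

namespace WeylModule

variable {n : ℕ} {P : Type*} [AddCommGroup P] [Module ℂ P]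

/-- The operator `D(u,r) = x^r ∑ᵢ uᵢ ∂ᵢ ∈ 𝒦ₙ` acting on `P`. -/
noncomputable def D (K : WeylModule n P) (u : Fin n → ℂ) (r : Fin n → ℤ) : Module.End ℂ P :=
  K.X r * ∑ i, u i • K.pd i

end WeylModule

/-- The Laurent polynomial algebra `Aₙ`, as `ℤⁿ →₀ ℂ` (monomial `x^r` ↦ `single r 1`). -/
abbrev LaurentAlg (n : ℕ) := (Fin n → ℤ) →₀ ℂ

/-- Multiplication by `x^r` on the natural `𝒦ₙ`-module `Aₙ`. -/
noncomputable def Xnat (n : ℕ) (r : Fin n → ℤ) : Module.End ℂ (LaurentAlg n) :=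
  Finsupp.lsum ℂ fun s => Finsupp.lsingle (r + s)

/-- The operator `∂ᵢ = xᵢ∂/∂xᵢ` on the natural `𝒦ₙ`-module `Aₙ`: `∂ᵢ x^s = sᵢ x^s`. -/
noncomputable def dnat (n : ℕ) (i : Fin n) : Module.End ℂ (LaurentAlg n) :=
  Finsupp.lsum ℂ fun s => (s i : ℂ) • Finsupp.lsingle s

section Aux

variable {n : ℕ}

lemma Xnat_single (r s : Fin n → ℤ) (c : ℂ) :
    Xnat n r (Finsupp.single s c) = Finsupp.single (r + s) c := by
  simp [Xnat, Finsupp.lsum_single]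

lemma dnat_single (i : Fin n) (s : Fin n → ℤ) (c : ℂ) :
    dnat n i (Finsupp.single s c) = (s i : ℂ) • Finsupp.single s c := by
  simp [dnat, Finsupp.lsum_single]

lemma dnat_apply (i : Fin n) (f : LaurentAlg n) (a : Fin n → ℤ) :
    dnat n i f a = (a i : ℂ) * f a := by
  induction f using Finsupp.induction_linear with
  | zero => simp
  | add f g hf hg => simp [map_add, hf, hg, mul_add]
  | single s c =>
      rw [dnat_single]
      classical
      simp [Finsupp.single_apply]
      by_cases h : s = a
      · subst h; simp
      · simp [h]

/-- A subspace of `Aₙ` invariant under the `dnat i` which contains a nonzero element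
contains a nonzero monomial. -/
lemma exists_single_mem (W : Submodule ℂ (LaurentAlg n))
    (hd : ∀ i, W.map (dnat n i) ≤ W) :
    ∀ (f : LaurentAlg n), f ∈ W → f ≠ 0 →
      ∃ (r : Fin n → ℤ) (c : ℂ), c ≠ 0 ∧ Finsupp.single r c ∈ W := by
  classical
  suffices h : ∀ N (f : LaurentAlg n), f.support.card = N → f ∈ W → f ≠ 0 →
      ∃ (r : Fin n → ℤ) (c : ℂ), c ≠ 0 ∧ Finsupp.single r c ∈ W from
    fun f => h _ f rfl
  intro N
  induction N using Nat.strong_induction_on with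
  | _ N ih =>
  intro f hN hfW hf0
  by_cases hcard : f.support.card ≤ 1
  · -- f is a single
    have hne : f.support.Nonempty := Finsupp.support_nonempty_iff.mpr hf0
    obtain ⟨r, hr⟩ := hne
    have hsupp : f.support = {r} := by
      apply Finset.eq_singleton_iff_unique_mem.mpr
      exact ⟨hr, fun t ht => Finset.card_le_one.mp hcard t ht r hr⟩
    have : f = Finsupp.single r (f r) := by
      ext a
      by_cases ha : a = r
      · subst ha; simp
      · rw [Finsupp.single_apply, if_neg (fun h => ha h.symm)]
        by_contra hfa
        have : a ∈ f.support := Finsupp.mem_support_iff.mpr hfa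
        rw [hsupp, Finset.mem_singleton] at this
        exact ha this
    exact ⟨r, f r, Finsupp.mem_support_iff.mp hr, this ▸ hfW⟩
  · -- at least two elements in support; shrink
    push_neg at hcard
    obtain ⟨s, hs, t, ht, hst⟩ := Finset.one_lt_card.mp hcard
    obtain ⟨i, hi⟩ := Function.ne_iff.mp hst
    set g : LaurentAlg n := dnat n i f - (t i : ℂ) • f with hg
    have hgW : g ∈ W := by
      refine sub_mem (hd i ⟨f, hfW, rfl⟩) (Submodule.smul_mem _ _ hfW)
    have hga : ∀ a, g a = ((a i : ℂ) - (t i : ℂ)) * f a := by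
      intro a
      simp [hg, dnat_apply, sub_mul]
    have hgsupp : g.support ⊆ f.support.erase t := by
      intro a ha
      rw [Finsupp.mem_support_iff] at ha
      rw [hga] at ha
      rcases mul_ne_zero_iff.mp ha with ⟨_, ha2⟩
      refine Finset.mem_erase.mpr ⟨?_, Finsupp.mem_support_iff.mpr ha2⟩
      rintro rfl
      simp at ha
    have hg0 : g ≠ 0 := by
      intro h
      have := hga s
      rw [h] at this
      simp only [Finsupp.coe_zero, Pi.zero_apply] at this
      rcases (mul_eq_zero.mp this.symm) with h1 | h2
      · have : (s i : ℂ) = (t i : ℂ) := by linear_combination h1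
        exact hi (by exact_mod_cast this)
      · exact Finsupp.mem_support_iff.mp hs h2
    have hlt : g.support.card < N := by
      calc g.support.card ≤ (f.support.erase t).card := Finset.card_le_card hgsupp
        _ < f.support.card := Finset.card_erase_lt_of_mem ht
        _ = N := hN
    exact ih _ hlt g rfl hgW hg0

lemma invariant_bot_or_top (W : Submodule ℂ (LaurentAlg n))
    (hX : ∀ r, W.map (Xnat n r) ≤ W) (hd : ∀ i, W.map (dnat n i) ≤ W) :
    W = ⊥ ∨ W = ⊤ := by
  by_cases hW : W = ⊥
  · exact Or.inl hW
  · right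
    obtain ⟨f, hfW, hf0⟩ := Submodule.exists_mem_ne_zero_of_ne_bot hW
    obtain ⟨r, c, hc, hrc⟩ := exists_single_mem W hd f hfW hf0
    have hsingle : ∀ s : Fin n → ℤ, Finsupp.single s (1 : ℂ) ∈ W := by
      intro s
      have h1 : Xnat n (s - r) (Finsupp.single r c) ∈ W := hX _ ⟨_, hrc, rfl⟩
      rw [Xnat_single, sub_add_cancel] at h1
      have := Submodule.smul_mem W c⁻¹ h1
      rwa [Finsupp.smul_single, smul_eq_mul, inv_mul_cancel₀ hc] at this
    have key : ∀ f : LaurentAlg n, f ∈ W := by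
      intro f
      induction f using Finsupp.induction_linear with
      | zero => exact zero_mem W
      | add f g hf hg => exact add_mem hf hg
      | single s c' =>
          have := Submodule.smul_mem W c' (hsingle s)
          rwa [Finsupp.smul_single, smul_eq_mul, mul_one] at this
    rw [eq_top_iff]
    exact fun f _ => key f

end Aux

/-- If `P` is a simple `𝒦ₙ`-module containing a nonzero vector `p` with `∂ᵢ p = 0` for all
`i`, then `P` is isomorphic to the natural `𝒦ₙ`-module `Aₙ`. -/
theorem simple_weyl_module_with_flat_vector_iso_natural (n : ℕ)
    (P : Type*) [AddCommGroup P] [Module ℂ P] [Nontrivial P] (K : WeylModule n P)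
    (hsimple : ∀ W : Submodule ℂ P, (∀ r, W.map (K.X r) ≤ W) →
      (∀ i, W.map (K.pd i) ≤ W) → W = ⊥ ∨ W = ⊤)
    (p : P) (hp : p ≠ 0) (hpd : ∀ i, K.pd i p = 0) :
    ∃ e : P ≃ₗ[ℂ] LaurentAlg n,
      (∀ (r : Fin n → ℤ) (x : P), e (K.X r x) = Xnat n r (e x)) ∧
      (∀ (i : Fin n) (x : P), e (K.pd i x) = dnat n i (e x)) := by
  classical
  set φ : LaurentAlg n →ₗ[ℂ] P :=
    Finsupp.lsum ℂ (fun r => LinearMap.toSpanSingleton ℂ P (K.X r p)) with hφ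
  have φ_single : ∀ (r : Fin n → ℤ) (c : ℂ), φ (Finsupp.single r c) = c • K.X r p := by
    intro r c
    simp [hφ, Finsupp.lsum_single, LinearMap.toSpanSingleton_apply]
  have hφX : ∀ (r : Fin n → ℤ) (f : LaurentAlg n), φ (Xnat n r f) = K.X r (φ f) := by
    intro r f
    induction f using Finsupp.induction_linear with
    | zero => simp
    | add f g hf hg => simp [map_add, hf, hg]
    | single s c =>
        rw [Xnat_single, φ_single, φ_single, map_smul, K.X_add, Module.End.mul_apply]
  have hφd : ∀ (i : Fin n) (f : LaurentAlg n), φ (dnat n i f) = K.pd i (φ f) := by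
    intro i f
    induction f using Finsupp.induction_linear with
    | zero => simp
    | add f g hf hg => simp [map_add, hf, hg]
    | single s c =>
        rw [dnat_single, map_smul, φ_single]
        have h2 := congrArg (fun T : Module.End ℂ P => T p) (K.pd_X i s)
        simp only [Module.End.mul_apply, LinearMap.add_apply, LinearMap.smul_apply,
          Module.End.one_apply, hpd i, zero_add, map_zero, map_smul] at h2
        rw [map_smul, h2, smul_comm]
  have hp_in : φ (Finsupp.single 0 (1 : ℂ)) = p := by
    rw [φ_single, K.X_zero, one_smul, Module.End.one_apply]
  -- surjectivity
  have hsurj : Function.Surjective φ := by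
    have hrange := hsimple (LinearMap.range φ) ?_ ?_
    · rcases hrange with h | h
      · exfalso
        apply hp
        rw [← hp_in]
        have : φ (Finsupp.single 0 (1 : ℂ)) ∈ LinearMap.range φ := ⟨_, rfl⟩
        rw [h] at this
        simpa using this
      · exact LinearMap.range_eq_top.mp h
    · rintro r x ⟨y, ⟨f, rfl⟩, rfl⟩
      exact ⟨Xnat n r f, hφX r f⟩
    · rintro i x ⟨y, ⟨f, rfl⟩, rfl⟩
      exact ⟨dnat n i f, hφd i f⟩
  -- injectivity
  have hinj : Function.Injective φ := by
    rw [← LinearMap.ker_eq_bot]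
    have halt := invariant_bot_or_top (LinearMap.ker φ) ?_ ?_
    · rcases halt with h | h
      · exact h
      · exfalso
        apply hp
        rw [← hp_in]
        have : Finsupp.single (0 : Fin n → ℤ) (1 : ℂ) ∈ LinearMap.ker φ := by rw [h]; trivial
        exact LinearMap.mem_ker.mp this
    · rintro r x ⟨f, hf, rfl⟩
      have hf' : φ f = 0 := hf
      rw [LinearMap.mem_ker, hφX, hf', map_zero]
    · rintro i x ⟨f, hf, rfl⟩
      have hf' : φ f = 0 := hf
      rw [LinearMap.mem_ker, hφd, hf', map_zero]
  set eq := LinearEquiv.ofBijective φ ⟨hinj, hsurj⟩ with heq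
  have heqa : ∀ f, eq f = φ f := fun f => rfl
  refine ⟨eq.symm, ?_, ?_⟩
  · intro r x
    apply eq.injective
    rw [eq.apply_symm_apply, heqa, hφX, ← heqa, eq.apply_symm_apply]
  · intro i x
    apply eq.injective
    rw [eq.apply_symm_apply, heqa, hφd, ← heqa, eq.apply_symm_apply]
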